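/- Let W be a finite group of linear automorphisms of a finite-dimensional real vector space V*, and let w be a linear automorphism of V*. Suppose that for every φ ∈ V* there exists w'_φ ∈ W with w'_φ(φ) = w(φ). Then w ∈ W, i.e., there is a single element w' ∈ W with w'(φ) = w(φ) for all φ. -/

import Mathlib

/-- The loci where `g` agrees with some `f i` cover `E`, and a vector space over an infinite
field is not a finite union of proper subspaces. -/
theorem LinearMap.exists_eq_of_forall_exists_apply_eq {k E F ι : Type*} [DivisionRing k]
    [Infinite k] [AddCommGroup E] [Module k E] [AddCommGroup F] [Module k F] [Finite ι]
    (f : ι → E →ₗ[k] F) (g : E →ₗ[k] F) (h : ∀ x, ∃ i, f i x = g x) : ∃ i, f i = g := by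
  have hcovers : ⋃ i, ((f i).eqLocus g : Set E) = Set.univ :=
    Set.eq_univ_of_forall fun x => Set.mem_iUnion.mpr (h x)
  obtain ⟨i, hi⟩ := Subspace.exists_eq_top_of_iUnion_eq_univ hcovers
  exact ⟨i, LinearMap.eqLocus_eq_top.mp hi⟩

theorem mem_of_pointwise_agreement_general
    (V : Type*) [AddCommGroup V] [Module ℝ V]
    (W : Subgroup (LinearMap.GeneralLinearGroup ℝ V)) [Finite W]
    (w : LinearMap.GeneralLinearGroup ℝ V)
    (hpt : ∀ φ : V, ∃ w' ∈ W, (w' : V →ₗ[ℝ] V) φ = (w : V →ₗ[ℝ] V) φ) :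
    w ∈ W := by
  have hagree (φ : V) : ∃ u : W, (u.1 : V →ₗ[ℝ] V) φ = (w : V →ₗ[ℝ] V) φ :=
    let ⟨w', hw'W, hw'⟩ := hpt φ
    ⟨⟨w', hw'W⟩, hw'⟩
  obtain ⟨u, hu⟩ := LinearMap.exists_eq_of_forall_exists_apply_eq _ _ hagree
  exact Units.ext hu ▸ u.2

/-- If `W` is a finite group of linear automorphisms of a finite-dimensional real
vector space `V*`, and `w` is a linear automorphism such that every `φ ∈ V*` satisfies
`w'_φ φ = w φ` for some (possibly `φ`-dependent) `w'_φ ∈ W`, then `w ∈ W`. -/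
theorem mem_of_pointwise_agreement
    (V : Type*) [AddCommGroup V] [Module ℝ V] [FiniteDimensional ℝ V]
    (W : Subgroup (LinearMap.GeneralLinearGroup ℝ V)) [Finite W]
    (w : LinearMap.GeneralLinearGroup ℝ V)
    (hpt : ∀ φ : V, ∃ w' ∈ W, (w' : V →ₗ[ℝ] V) φ = (w : V →ₗ[ℝ] V) φ) :
    w ∈ W :=
  mem_of_pointwise_agreement_general V W w hpt
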